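/- For every real number a > 0, it holds that 1/2 < (1+a)·(e^{-a} - 1 + a)/a² < 1. -/

import Mathlib

/-!
Since `(1 + a) (e⁻ᵃ - 1 + a) = (1 + a) e⁻ᵃ - 1 + a²`, the two bounds amount to
`1 - a² / 2 < (1 + a) e⁻ᵃ < 1`. The upper one is `1 + a < eᵃ`; the lower one follows by
monotonicity, as `(1 + x) e⁻ˣ` decreases more slowly than `1 - x² / 2`.
-/

open Real Set

theorem hasDerivAt_one_add_mul_exp_neg (x : ℝ) :
    HasDerivAt (fun x => (1 + x) * exp (-x)) (-(x * exp (-x))) x :=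
  (((hasDerivAt_id x).const_add 1).mul (hasDerivAt_neg x).exp).congr_deriv (by simp only [id]; ring)

theorem one_add_mul_exp_neg_lt_one {x : ℝ} (hx : x ≠ 0) : (1 + x) * exp (-x) < 1 := by
  calc (1 + x) * exp (-x) < exp x * exp (-x) := by
        gcongr
        linarith [add_one_lt_exp hx]
    _ = 1 := by rw [← exp_add, add_neg_cancel, exp_zero]

theorem one_sub_sq_div_two_lt_one_add_mul_exp_neg {x : ℝ} (hx : 0 < x) :
    1 - x ^ 2 / 2 < (1 + x) * exp (-x) := by
  let f : ℝ → ℝ := fun x => (1 + x) * exp (-x) + x ^ 2 / 2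
  have hf : ∀ y, HasDerivAt f (y * (1 - exp (-y))) y := fun y => by
    refine ((hasDerivAt_one_add_mul_exp_neg y).add
      ((hasDerivAt_pow 2 y).div_const 2)).congr_deriv ?_
    ring
  have hmono : StrictMonoOn f (Ici 0) := by
    refine strictMonoOn_of_deriv_pos (convex_Ici 0)
      (continuous_iff_continuousAt.2 fun y => (hf y).continuousAt).continuousOn fun y hy => ?_
    rw [interior_Ici] at hy
    rw [(hf y).deriv]
    exact mul_pos hy (sub_pos.2 (exp_lt_one_iff.2 (neg_lt_zero.2 hy)))
  have := hmono self_mem_Ici hx.le hx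
  norm_num [f] at this
  linarith

theorem etd_phi2_bound (a : ℝ) (ha : 0 < a) :
    1 / 2 < (1 + a) * ((Real.exp (-a) - 1 + a) / a ^ 2) ∧
      (1 + a) * ((Real.exp (-a) - 1 + a) / a ^ 2) < 1 := by
  have hlower := one_sub_sq_div_two_lt_one_add_mul_exp_neg ha
  have hupper := one_add_mul_exp_neg_lt_one ha.ne'
  have ha2 : 0 < a ^ 2 := by positivity
  rw [mul_div_assoc', lt_div_iff₀ ha2, div_lt_one ha2]
  constructor <;> nlinarith
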